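/- Let k ≥ 1. Let A be a nonnegative real square matrix indexed by Σ i, Fin (s i) (with s i ≥ 1 for all i) partitioned into k² blocks with square diagonal blocks, and let B be a nonnegative real square matrix indexed by Σ i, Fin (t i) (with t i ≥ 1 for all i) partitioned into k² blocks with square diagonal blocks. Let A↑ be the k×k matrix of maximum block row sums of A, and B↓ the k×k matrix of minimum block row sums of B. If A↑ i j ≤ B↓ i j for all i, j, then ρ(A) ≤ ρ(B). -/

import Mathlib

/-!
Let `A↑` be the matrix of maximal and `B↓` the matrix of minimal block row sums. By induction on
`n`, every block row sum of `Aⁿ` is at most the corresponding entry of `A↑ⁿ`, and every block row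
sum of `Bⁿ` is at least the corresponding entry of `B↓ⁿ`. Since `0 ≤ A↑ ≤ B↓` entrywise, this gives
`‖Aⁿ‖ ≤ ‖A↑ⁿ‖ ≤ ‖B↓ⁿ‖ ≤ ‖Bⁿ‖` for the maximal-row-sum norm, and Gelfand's formula turns these
bounds into `ρ(A) ≤ ρ(B)`.
-/

open Matrix

/-- Spectral radius of a real square matrix: the maximum of the moduli of its
complex eigenvalues (elements of the spectrum of the matrix over `ℂ`). -/
noncomputable def specRad {n : Type*} [Fintype n] [DecidableEq n]
    (M : Matrix n n ℝ) : ℝ :=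
  sSup ((fun z : ℂ => ‖z‖) '' spectrum ℂ (M.map (algebraMap ℝ ℂ)))

open scoped NNReal ENNReal

attribute [local instance] Matrix.linftyOpSeminormedAddCommGroup Matrix.linftyOpNormedAddCommGroup
  Matrix.linftyOpNormedRing Matrix.linftyOpNormedAlgebra

namespace Matrix

section BlockRowSum

variable {m κ α : Type*} {ι : κ → Type*} [∀ i, Fintype (ι i)]

def blockRowSum [AddCommMonoid α] (M : Matrix m (Σ i, ι i) α) : Matrix m κ α :=
  of fun p j => ∑ v, M p ⟨j, v⟩

theorem blockRowSum_nonneg [AddCommMonoid α] [PartialOrder α] [IsOrderedAddMonoid α]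
    {M : Matrix m (Σ i, ι i) α} (hM : ∀ p q, 0 ≤ M p q) (p : m) (j : κ) :
    0 ≤ blockRowSum M p j :=
  Finset.sum_nonneg fun v _ => hM p ⟨j, v⟩

variable [Semiring α]

theorem blockRowSum_one [DecidableEq κ] [∀ i, DecidableEq (ι i)] :
    blockRowSum (1 : Matrix (Σ i, ι i) (Σ i, ι i) α) =
      (1 : Matrix κ κ α).submatrix Sigma.fst id := by
  ext ⟨i, u⟩ j
  rcases eq_or_ne i j with rfl | hij
  · simp [blockRowSum, one_apply, Finset.filter_eq]
  · simp [blockRowSum, one_apply, hij]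

variable [Fintype κ]

theorem blockRowSum_mul [Fintype m] (M : Matrix m (Σ i, ι i) α)
    (N : Matrix (Σ i, ι i) (Σ i, ι i) α) :
    blockRowSum (M * N) = M * blockRowSum N := by
  ext p j
  simp only [blockRowSum, of_apply, mul_apply, Finset.mul_sum]
  exact Finset.sum_comm

theorem mul_submatrix_fst_id (M : Matrix m (Σ i, ι i) α) (X : Matrix κ κ α) :
    M * X.submatrix Sigma.fst id = blockRowSum M * X := by
  ext p j
  simp only [mul_apply, blockRowSum, of_apply, Finset.sum_mul]
  exact Fintype.sum_sigma _

variable [DecidableEq κ] [∀ i, DecidableEq (ι i)] [PartialOrder α] [IsOrderedRing α]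

theorem blockRowSum_pow_le {A : Matrix (Σ i, ι i) (Σ i, ι i) α} {C : Matrix κ κ α}
    (hA : ∀ p q, 0 ≤ A p q) (hC : ∀ i j, 0 ≤ C i j)
    (hAC : ∀ p j, blockRowSum A p j ≤ C p.1 j) (n : ℕ) (p : Σ i, ι i) (j : κ) :
    blockRowSum (A ^ n) p j ≤ (C ^ n) p.1 j := by
  induction n generalizing p j with
  | zero => rw [pow_zero, pow_zero, blockRowSum_one]; exact le_rfl
  | succ n ih =>
    calc blockRowSum (A ^ (n + 1)) p j
        = ∑ q, A p q * blockRowSum (A ^ n) q j := by rw [pow_succ', blockRowSum_mul, mul_apply]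
      _ ≤ ∑ q, A p q * (C ^ n) q.1 j :=
        Finset.sum_le_sum fun q _ => mul_le_mul_of_nonneg_left (ih q j) (hA p q)
      _ = ∑ l, blockRowSum A p l * (C ^ n) l j := by
        rw [← mul_apply, ← mul_submatrix_fst_id]; rfl
      _ ≤ ∑ l, C p.1 l * (C ^ n) l j :=
        Finset.sum_le_sum fun l _ =>
          mul_le_mul_of_nonneg_right (hAC p l) (pow_apply_nonneg hC n l j)
      _ = (C ^ (n + 1)) p.1 j := by rw [pow_succ', mul_apply]

theorem le_blockRowSum_pow {B : Matrix (Σ i, ι i) (Σ i, ι i) α} {D : Matrix κ κ α}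
    (hB : ∀ p q, 0 ≤ B p q) (hD : ∀ i j, 0 ≤ D i j)
    (hDB : ∀ p j, D p.1 j ≤ blockRowSum B p j) (n : ℕ) (p : Σ i, ι i) (j : κ) :
    (D ^ n) p.1 j ≤ blockRowSum (B ^ n) p j := by
  induction n generalizing p j with
  | zero => rw [pow_zero, pow_zero, blockRowSum_one]; exact le_rfl
  | succ n ih =>
    calc (D ^ (n + 1)) p.1 j
        = ∑ l, D p.1 l * (D ^ n) l j := by rw [pow_succ', mul_apply]
      _ ≤ ∑ l, blockRowSum B p l * (D ^ n) l j :=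
        Finset.sum_le_sum fun l _ =>
          mul_le_mul_of_nonneg_right (hDB p l) (pow_apply_nonneg hD n l j)
      _ = ∑ q, B p q * (D ^ n) q.1 j := by
        rw [← mul_apply, ← mul_submatrix_fst_id]; rfl
      _ ≤ ∑ q, B p q * blockRowSum (B ^ n) q j :=
        Finset.sum_le_sum fun q _ => mul_le_mul_of_nonneg_left (ih q j) (hB p q)
      _ = blockRowSum (B ^ (n + 1)) p j := by rw [pow_succ', blockRowSum_mul, mul_apply]

end BlockRowSum

theorem pow_apply_le_pow_apply {n α : Type*} [Fintype n] [DecidableEq n] [Semiring α]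
    [PartialOrder α] [IsOrderedRing α] {M N : Matrix n n α} (hM : ∀ p q, 0 ≤ M p q)
    (hMN : ∀ p q, M p q ≤ N p q) (k : ℕ) (p q : n) : (M ^ k) p q ≤ (N ^ k) p q := by
  induction k generalizing q with
  | zero => exact le_rfl
  | succ k ih =>
    rw [pow_succ, pow_succ, mul_apply, mul_apply]
    exact Finset.sum_le_sum fun r _ =>
      mul_le_mul (ih r) (hMN r q) (hM r q) ((pow_apply_nonneg hM k p r).trans (ih r))

section LinftyOpNorm

variable {m n : Type*} [Fintype m] [Fintype n]

theorem linfty_opNorm_le_iff {α : Type*} [SeminormedAddCommGroup α] (M : Matrix m n α) {r : ℝ}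
    (hr : 0 ≤ r) : ‖M‖ ≤ r ↔ ∀ p, ∑ q, ‖M p q‖ ≤ r := by
  lift r to ℝ≥0 using hr
  rw [linfty_opNorm_def, NNReal.coe_le_coe, Finset.sup_le_iff]
  simp only [Finset.mem_univ, true_implies, ← NNReal.coe_le_coe, NNReal.coe_sum, coe_nnnorm]

theorem sum_norm_le_linfty_opNorm {α : Type*} [SeminormedAddCommGroup α] (M : Matrix m n α)
    (p : m) : ∑ q, ‖M p q‖ ≤ ‖M‖ :=
  (linfty_opNorm_le_iff M (norm_nonneg M)).1 le_rfl p

theorem linfty_opNorm_mono {M N : Matrix m n ℝ} (hM : ∀ p q, 0 ≤ M p q)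
    (hMN : ∀ p q, M p q ≤ N p q) : ‖M‖ ≤ ‖N‖ :=
  (linfty_opNorm_le_iff M (norm_nonneg N)).2 fun p =>
    (Finset.sum_le_sum fun q _ => by
        simpa only [Real.norm_eq_abs] using abs_le_abs_of_nonneg (hM p q) (hMN p q)).trans
      (sum_norm_le_linfty_opNorm N p)

theorem linfty_opNorm_map_algebraMap (M : Matrix m n ℝ) :
    ‖M.map (algebraMap ℝ ℂ)‖ = ‖M‖ := by
  simp [linfty_opNorm_def]

variable {κ : Type*} [Fintype κ] {ι : κ → Type*} [∀ i, Fintype (ι i)]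

theorem linfty_opNorm_le_of_blockRowSum_le {M : Matrix (Σ i, ι i) (Σ i, ι i) ℝ}
    {C : Matrix κ κ ℝ} (hM : ∀ p q, 0 ≤ M p q) (hMC : ∀ p j, blockRowSum M p j ≤ C p.1 j) :
    ‖M‖ ≤ ‖C‖ := by
  refine (linfty_opNorm_le_iff M (norm_nonneg C)).2 fun p => ?_
  calc ∑ q, ‖M p q‖ = ∑ j, blockRowSum M p j := by
        simp only [Real.norm_of_nonneg (hM p _)]
        exact Fintype.sum_sigma _
    _ ≤ ∑ j, ‖C p.1 j‖ := Finset.sum_le_sum fun j _ => (hMC p j).trans (Real.le_norm_self _)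
    _ ≤ ‖C‖ := sum_norm_le_linfty_opNorm C p.1

theorem linfty_opNorm_le_of_le_blockRowSum (hι : ∀ i, Nonempty (ι i))
    {M : Matrix (Σ i, ι i) (Σ i, ι i) ℝ} {D : Matrix κ κ ℝ} (hD : ∀ i j, 0 ≤ D i j)
    (hDM : ∀ p j, D p.1 j ≤ blockRowSum M p j) : ‖D‖ ≤ ‖M‖ := by
  refine (linfty_opNorm_le_iff D (norm_nonneg M)).2 fun i => ?_
  let p : Σ i, ι i := ⟨i, (hι i).some⟩
  calc ∑ j, ‖D i j‖ = ∑ j, D i j := by simp only [Real.norm_of_nonneg (hD i _)]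
    _ ≤ ∑ j, blockRowSum M p j := Finset.sum_le_sum fun j _ => hDM p j
    _ = ∑ q, M p q := (Fintype.sum_sigma _).symm
    _ ≤ ∑ q, ‖M p q‖ := Finset.sum_le_sum fun q _ => Real.le_norm_self _
    _ ≤ ‖M‖ := sum_norm_le_linfty_opNorm M p

end LinftyOpNorm

end Matrix

theorem spectralRadius_le_of_forall_norm_pow_le {A B : Type*} [NormedRing A] [NormedAlgebra ℂ A]
    [CompleteSpace A] [NormedRing B] [NormedAlgebra ℂ B] [CompleteSpace B] {a : A} {b : B}
    (h : ∀ n : ℕ, ‖a ^ n‖ ≤ ‖b ^ n‖) : spectralRadius ℂ a ≤ spectralRadius ℂ b := by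
  rw [← (spectrum.pow_nnnorm_pow_one_div_tendsto_nhds_spectralRadius b).liminf_eq]
  refine (spectrum.spectralRadius_le_liminf_pow_nnnorm_pow_one_div ℂ a).trans
    (Filter.liminf_le_liminf (.of_forall fun n => ?_))
  gcongr
  exact h n

section SpecRad

variable {m n : Type*} [Fintype m] [DecidableEq m] [Fintype n] [DecidableEq n]

theorem ofReal_specRad (M : Matrix n n ℝ) :
    ENNReal.ofReal (specRad M) = spectralRadius ℂ (M.map (algebraMap ℝ ℂ)) := by
  rcases (spectrum ℂ (M.map (algebraMap ℝ ℂ))).eq_empty_or_nonempty with hσ | hσ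
  · rw [specRad, spectralRadius, hσ]
    simp
  obtain ⟨z, hz, hzr⟩ := spectrum.exists_nnnorm_eq_spectralRadius_of_nonempty hσ
  have hmax : IsGreatest ((fun z : ℂ => ‖z‖) '' spectrum ℂ (M.map (algebraMap ℝ ℂ))) ‖z‖ := by
    refine ⟨⟨z, hz, rfl⟩, ?_⟩
    rintro _ ⟨w, hw, rfl⟩
    have hwz : (‖w‖₊ : ℝ≥0∞) ≤ ‖z‖₊ :=
      hzr ▸ le_iSup₂ (f := fun k (_ : k ∈ spectrum ℂ _) => (‖k‖₊ : ℝ≥0∞)) w hw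
    exact_mod_cast hwz
  rw [specRad, hmax.csSup_eq, ← hzr, ofReal_norm]
  rfl

theorem specRad_nonneg (M : Matrix n n ℝ) : 0 ≤ specRad M :=
  Real.sSup_nonneg (by rintro _ ⟨z, -, rfl⟩; exact norm_nonneg z)

theorem specRad_le_of_forall_norm_pow_le {M : Matrix m m ℝ} {N : Matrix n n ℝ}
    (h : ∀ k : ℕ, ‖M ^ k‖ ≤ ‖N ^ k‖) : specRad M ≤ specRad N := by
  have hsr :
      spectralRadius ℂ (M.map (algebraMap ℝ ℂ)) ≤ spectralRadius ℂ (N.map (algebraMap ℝ ℂ)) :=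
    spectralRadius_le_of_forall_norm_pow_le fun k => by
      simpa only [← Matrix.map_pow, Matrix.linfty_opNorm_map_algebraMap] using h k
  rwa [← ofReal_specRad, ← ofReal_specRad, ENNReal.ofReal_le_ofReal_iff (specRad_nonneg N)] at hsr

end SpecRad

theorem specRad_le_of_upwardContraction_le_downwardContraction_general
    {k : ℕ} (s t : Fin k → ℕ)
    (hs : ∀ i, 1 ≤ s i) (ht : ∀ i, 1 ≤ t i)
    (A : Matrix (Σ i, Fin (s i)) (Σ i, Fin (s i)) ℝ)
    (hA : ∀ p q, 0 ≤ A p q)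
    (B : Matrix (Σ i, Fin (t i)) (Σ i, Fin (t i)) ℝ)
    (hB : ∀ p q, 0 ≤ B p q)
    (hle : ∀ i j : Fin k,
      Finset.univ.sup'
          (Finset.univ_nonempty_iff.mpr (Fin.pos_iff_nonempty.mp (hs i)))
          (fun u : Fin (s i) => ∑ v : Fin (s j), A ⟨i, u⟩ ⟨j, v⟩) ≤
        Finset.univ.inf'
          (Finset.univ_nonempty_iff.mpr (Fin.pos_iff_nonempty.mp (ht i)))
          (fun u : Fin (t i) => ∑ v : Fin (t j), B ⟨i, u⟩ ⟨j, v⟩)) :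
    specRad A ≤ specRad B := by
  let C : Matrix (Fin k) (Fin k) ℝ := fun i j =>
    Finset.univ.sup' (Finset.univ_nonempty_iff.mpr (Fin.pos_iff_nonempty.mp (hs i)))
      (fun u : Fin (s i) => ∑ v : Fin (s j), A ⟨i, u⟩ ⟨j, v⟩)
  let D : Matrix (Fin k) (Fin k) ℝ := fun i j =>
    Finset.univ.inf' (Finset.univ_nonempty_iff.mpr (Fin.pos_iff_nonempty.mp (ht i)))
      (fun u : Fin (t i) => ∑ v : Fin (t j), B ⟨i, u⟩ ⟨j, v⟩)
  have hAC : ∀ p j, blockRowSum A p j ≤ C p.1 j := fun ⟨i, u⟩ j =>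
    Finset.le_sup' (fun u => ∑ v, A ⟨i, u⟩ ⟨j, v⟩) (Finset.mem_univ u)
  have hDB : ∀ p j, D p.1 j ≤ blockRowSum B p j := fun ⟨i, u⟩ j =>
    Finset.inf'_le (fun u => ∑ v, B ⟨i, u⟩ ⟨j, v⟩) (Finset.mem_univ u)
  have hC : ∀ i j, 0 ≤ C i j := fun i j =>
    (blockRowSum_nonneg hA ⟨i, ⟨0, hs i⟩⟩ j).trans (hAC _ j)
  have hD : ∀ i j, 0 ≤ D i j := fun i j => (hC i j).trans (hle i j)
  refine specRad_le_of_forall_norm_pow_le fun n => ?_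
  calc ‖A ^ n‖ ≤ ‖C ^ n‖ := linfty_opNorm_le_of_blockRowSum_le (pow_apply_nonneg hA n)
        (blockRowSum_pow_le hA hC hAC n)
    _ ≤ ‖D ^ n‖ := linfty_opNorm_mono (pow_apply_nonneg hC n) (pow_apply_le_pow_apply hC hle n)
    _ ≤ ‖B ^ n‖ := linfty_opNorm_le_of_le_blockRowSum (fun i => Fin.pos_iff_nonempty.mp (ht i))
        (pow_apply_nonneg hD n) (le_blockRowSum_pow hB hD hDB n)

/-- Comparison of spectral radii via block row sum contractions: if each maximum
block row sum of `A` is at most the corresponding minimum block row sum of `B`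
(both partitioned into `k²` blocks with square diagonal blocks), then
`ρ(A) ≤ ρ(B)`. -/
theorem specRad_le_of_upwardContraction_le_downwardContraction
    {k : ℕ} (hk : 1 ≤ k) (s t : Fin k → ℕ)
    (hs : ∀ i, 1 ≤ s i) (ht : ∀ i, 1 ≤ t i)
    (A : Matrix (Σ i, Fin (s i)) (Σ i, Fin (s i)) ℝ)
    (hA : ∀ p q, 0 ≤ A p q)
    (B : Matrix (Σ i, Fin (t i)) (Σ i, Fin (t i)) ℝ)
    (hB : ∀ p q, 0 ≤ B p q)
    (hle : ∀ i j : Fin k,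
      Finset.univ.sup'
          (Finset.univ_nonempty_iff.mpr (Fin.pos_iff_nonempty.mp (hs i)))
          (fun u : Fin (s i) => ∑ v : Fin (s j), A ⟨i, u⟩ ⟨j, v⟩) ≤
        Finset.univ.inf'
          (Finset.univ_nonempty_iff.mpr (Fin.pos_iff_nonempty.mp (ht i)))
          (fun u : Fin (t i) => ∑ v : Fin (t j), B ⟨i, u⟩ ⟨j, v⟩)) :
    specRad A ≤ specRad B :=
  specRad_le_of_upwardContraction_le_downwardContraction_general s t hs ht A hA B hB hle
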